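/- Let d ≥ 2 and let a = (a_1, …, a_d) be a probability vector with a_1 ≥ … ≥ a_d > 0, and let k < d be such that a_1 = a_k > a_{k+1}. For every real R with log k < R < log d, there exists s > 0 such that the escort distribution a^{(s)}, defined by a^{(s)}_i = a_i^s / ∑_{j=1}^d a_j^s, satisfies H(a^{(s)}) = R, and for every probability vector b on {1, …, d} with H(b) = R one has D(b‖a) ≥ D(a^{(s)}‖a); in particular, min{ D(b‖a) : H(b) = R } = D(a^{(s)}‖a). -/

import Mathlib

open Finset

/-- Shannon entropy of a vector on `Fin d` (natural logarithm, `0 * log 0 = 0`). -/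
noncomputable def shannonEntropy {d : ℕ} (b : Fin d → ℝ) : ℝ :=
  -∑ i, b i * Real.log (b i)

/-- Relative entropy `D(b‖a)` (natural logarithm). -/
noncomputable def relativeEntropy {d : ℕ} (b a : Fin d → ℝ) : ℝ :=
  ∑ i, b i * (Real.log (b i) - Real.log (a i))

/-- The escort distribution `a^(s)_i = a_i^s / ∑_j a_j^s` (real powers). -/
noncomputable def escort {d : ℕ} (a : Fin d → ℝ) (s : ℝ) : Fin d → ℝ :=
  fun i => a i ^ s / ∑ j, a j ^ s

lemma Zpos {d : ℕ} (hd : 0 < d) (a : Fin d → ℝ) (ha : ∀ i, 0 < a i) (s : ℝ) :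
    0 < ∑ j, a j ^ s :=
  Finset.sum_pos (fun j _ => Real.rpow_pos_of_pos (ha j) s) (by simp [Finset.univ_nonempty_iff, Fin.pos_iff_nonempty.mp hd])

lemma escort_pos {d : ℕ} (hd : 0 < d) (a : Fin d → ℝ) (ha : ∀ i, 0 < a i) (s : ℝ) (i : Fin d) :
    0 < escort a s i :=
  div_pos (Real.rpow_pos_of_pos (ha i) s) (Zpos hd a ha s)

lemma escort_sum {d : ℕ} (hd : 0 < d) (a : Fin d → ℝ) (ha : ∀ i, 0 < a i) (s : ℝ) :
    ∑ i, escort a s i = 1 := by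
  simp only [escort]
  rw [← Finset.sum_div]
  exact div_self (Zpos hd a ha s).ne'

lemma log_escort {d : ℕ} (hd : 0 < d) (a : Fin d → ℝ) (ha : ∀ i, 0 < a i) (s : ℝ) (i : Fin d) :
    Real.log (escort a s i) = s * Real.log (a i) - Real.log (∑ j, a j ^ s) := by
  rw [escort, Real.log_div (Real.rpow_pos_of_pos (ha i) s).ne' (Zpos hd a ha s).ne',
    Real.log_rpow (ha i)]

lemma sum_ite_lt {d k : ℕ} (hkd : k < d) (x : ℝ) :
    ∑ j : Fin d, (if (j : ℕ) < k then x else 0) = k * x := by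
  rw [← Finset.sum_filter]
  have : Finset.filter (fun j : Fin d => (j : ℕ) < k) Finset.univ = Finset.Iio ⟨k, hkd⟩ := by
    ext j; simp [Fin.lt_def]
  rw [this, Finset.sum_const, Fin.card_Iio, nsmul_eq_mul]

lemma gibbs {d : ℕ} (b p : Fin d → ℝ) (hb0 : ∀ i, 0 ≤ b i) (hp : ∀ i, 0 < p i)
    (hbs : ∑ i, b i = 1) (hps : ∑ i, p i = 1) :
    ∑ i, b i * Real.log (p i) ≤ ∑ i, b i * Real.log (b i) := by
  have h1 : ∀ i : Fin d, b i * Real.log (p i) - b i * Real.log (b i) ≤ p i - b i := by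
    intro i
    rcases eq_or_lt_of_le (hb0 i) with h | h
    · simp [← h]; exact (hp i).le
    · have hq : 0 < p i / b i := div_pos (hp i) h
      have hlog := Real.log_le_sub_one_of_pos hq
      rw [Real.log_div (hp i).ne' h.ne'] at hlog
      calc b i * Real.log (p i) - b i * Real.log (b i)
          = b i * (Real.log (p i) - Real.log (b i)) := by ring
        _ ≤ b i * (p i / b i - 1) := mul_le_mul_of_nonneg_left hlog h.le
        _ = p i - b i := by field_simp
  have h2 := Finset.sum_le_sum (fun i (_ : i ∈ Finset.univ) => h1 i)
  rw [Finset.sum_sub_distrib, Finset.sum_sub_distrib, hbs, hps] at h2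
  linarith

lemma entropy_escort {d : ℕ} (hd : 0 < d) (a : Fin d → ℝ) (ha : ∀ i, 0 < a i) (s : ℝ) :
    shannonEntropy (escort a s)
      = Real.log (∑ j, a j ^ s) - s * ∑ i, escort a s i * Real.log (a i) := by
  rw [shannonEntropy]
  have h : ∀ i : Fin d, escort a s i * Real.log (escort a s i)
      = s * (escort a s i * Real.log (a i))
        - escort a s i * Real.log (∑ j, a j ^ s) := by
    intro i; rw [log_escort hd a ha s i]; ring
  rw [Finset.sum_congr rfl (fun i _ => h i), Finset.sum_sub_distrib, ← Finset.mul_sum,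
    ← Finset.sum_mul, escort_sum hd a ha s]
  ring

lemma relEnt_eq {d : ℕ} (b a : Fin d → ℝ) :
    relativeEntropy b a = -shannonEntropy b - ∑ i, b i * Real.log (a i) := by
  simp only [relativeEntropy, shannonEntropy, mul_sub, Finset.sum_sub_distrib]; ring

lemma rpow_fun_continuous {x : ℝ} (hx : 0 < x) : Continuous (fun s : ℝ => x ^ s) := by
  have : (fun s : ℝ => x ^ s) = fun s => Real.exp (Real.log x * s) := by
    funext s; rw [Real.rpow_def_of_pos hx, mul_comm]
  rw [this]; exact Real.continuous_exp.comp (continuous_const.mul continuous_id)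

lemma escort_continuous {d : ℕ} (hd : 0 < d) (a : Fin d → ℝ) (ha : ∀ i, 0 < a i) (i : Fin d) :
    Continuous (fun s => escort a s i) :=
  (rpow_fun_continuous (ha i)).div
    (continuous_finset_sum _ fun j _ => rpow_fun_continuous (ha j))
    (fun s => (Zpos hd a ha s).ne')

lemma entropy_escort_continuous {d : ℕ} (hd : 0 < d) (a : Fin d → ℝ) (ha : ∀ i, 0 < a i) :
    Continuous (fun s => shannonEntropy (escort a s)) := by
  unfold shannonEntropy
  exact (continuous_finset_sum _ fun i _ =>
    Real.continuous_mul_log.comp (escort_continuous hd a ha i)).neg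

lemma entropy_escort_zero {d : ℕ} (hd : 0 < d) (a : Fin d → ℝ) (ha : ∀ i, 0 < a i) :
    shannonEntropy (escort a 0) = Real.log d := by
  have hdR : (0:ℝ) < d := by exact_mod_cast hd
  have he : ∀ i : Fin d, escort a 0 i = 1 / d := by
    intro i; rw [escort]; simp [Real.rpow_zero]
  rw [shannonEntropy, Finset.sum_congr rfl (fun i _ => by rw [he i]), Finset.sum_const,
    Finset.card_univ, Fintype.card_fin, nsmul_eq_mul, one_div, Real.log_inv]
  field_simp

lemma entropy_escort_tendsto {d : ℕ} (a : Fin d → ℝ)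
    (ha_pos : ∀ i, 0 < a i)
    (ha_anti : ∀ i j : Fin d, i ≤ j → a j ≤ a i)
    (k : ℕ) (hk1 : 1 ≤ k) (hkd : k < d)
    (hak : a ⟨0, by omega⟩ = a ⟨k - 1, Nat.lt_of_le_of_lt (Nat.sub_le k 1) hkd⟩)
    (hlt : a ⟨k, hkd⟩ < a ⟨k - 1, Nat.lt_of_le_of_lt (Nat.sub_le k 1) hkd⟩) :
    Filter.Tendsto (fun s => shannonEntropy (escort a s)) Filter.atTop
      (nhds (Real.log k)) := by
  have hd : 0 < d := by omega
  obtain ⟨M, hM⟩ : ∃ M : ℝ, a ⟨0, by omega⟩ = M := ⟨_, rfl⟩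
  have hMpos : 0 < M := hM ▸ ha_pos _
  have hkR : (0:ℝ) < k := by exact_mod_cast hk1
  -- values of a on the first k coordinates
  have hM1 : ∀ i : Fin d, (i : ℕ) < k → a i = M := by
    intro i hi
    refine le_antisymm ?_ ?_
    · rw [← hM]; exact ha_anti ⟨0, by omega⟩ i (by simp [Fin.le_def])
    · rw [← hM, hak]
      exact ha_anti i ⟨k - 1, by omega⟩ (by simp [Fin.le_def]; omega)
  have hM2 : ∀ i : Fin d, k ≤ (i : ℕ) → a i < M := by
    intro i hi
    have h1 : a i ≤ a ⟨k, hkd⟩ := ha_anti ⟨k, hkd⟩ i (by simp [Fin.le_def]; omega)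
    have h2 : a ⟨k - 1, by omega⟩ = M := by rw [← hak, hM]
    linarith [hlt]
  -- pointwise limits of the escort distribution
  set q : Fin d → ℝ := fun i => (if (i : ℕ) < k then 1 else 0) / k with hq
  have hrat : ∀ i : Fin d, Filter.Tendsto (fun s : ℝ => (a i / M) ^ s) Filter.atTop
      (nhds (if (i : ℕ) < k then 1 else 0)) := by
    intro i
    by_cases hi : (i : ℕ) < k
    · simp only [hi, if_pos]
      have : a i / M = 1 := by rw [hM1 i hi]; exact div_self hMpos.ne'
      simp [this, Real.one_rpow]
    · simp only [hi, if_neg, not_false_iff]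
      refine tendsto_rpow_atTop_of_base_lt_one _ ?_ ?_
      · have : 0 < a i / M := div_pos (ha_pos i) hMpos
        linarith
      · rw [div_lt_one hMpos]; exact hM2 i (by omega)
  have hesc_eq : ∀ (s : ℝ) (i : Fin d),
      escort a s i = (a i / M) ^ s / ∑ j, (a j / M) ^ s := by
    intro s i
    have hdiv : ∀ j : Fin d, (a j / M) ^ s = a j ^ s / M ^ s := fun j =>
      Real.div_rpow (ha_pos j).le hMpos.le s
    rw [escort, hdiv, Finset.sum_congr rfl (fun j _ => hdiv j), ← Finset.sum_div]
    rw [div_div_div_cancel_right₀]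
    exact (Real.rpow_pos_of_pos hMpos s).ne'
  have hsum : Filter.Tendsto (fun s : ℝ => ∑ j, (a j / M) ^ s) Filter.atTop
      (nhds (k : ℝ)) := by
    have := tendsto_finset_sum Finset.univ (fun j (_ : j ∈ Finset.univ) => hrat j)
    have hval : ∑ j : Fin d, (if (j : ℕ) < k then (1:ℝ) else 0) = (k : ℝ) := by
      rw [sum_ite_lt hkd]; ring
    rwa [hval] at this
  have hesc : ∀ i : Fin d, Filter.Tendsto (fun s => escort a s i) Filter.atTop
      (nhds (q i)) := by
    intro i
    have := (hrat i).div hsum hkR.ne'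
    refine this.congr (fun s => (hesc_eq s i).symm)
  -- limit of the entropy
  have hent : Filter.Tendsto (fun s => shannonEntropy (escort a s)) Filter.atTop
      (nhds (-∑ i, q i * Real.log (q i))) := by
    simp only [shannonEntropy]
    exact (tendsto_finset_sum Finset.univ (fun i (_ : i ∈ Finset.univ) =>
      (Real.continuous_mul_log.tendsto (q i)).comp (hesc i))).neg
  have hval : -∑ i, q i * Real.log (q i) = Real.log k := by
    have : ∀ i : Fin d, q i * Real.log (q i)
        = if (i : ℕ) < k then (1 / k) * Real.log (1 / k) else 0 := by
      intro i
      by_cases hi : (i : ℕ) < k <;> simp [hq, hi]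
    rw [Finset.sum_congr rfl (fun i _ => this i), sum_ite_lt hkd, one_div, Real.log_inv]
    field_simp
  rwa [hval] at hent


theorem stmt_3 {d : ℕ} (hd : 2 ≤ d) (a : Fin d → ℝ)
    (ha_pos : ∀ i, 0 < a i)
    (ha_anti : ∀ i j : Fin d, i ≤ j → a j ≤ a i)
    (ha_sum : ∑ i, a i = 1)
    (k : ℕ) (hk1 : 1 ≤ k) (hkd : k < d)
    (hak : a ⟨0, by omega⟩ = a ⟨k - 1, by omega⟩)
    (hlt : a ⟨k, hkd⟩ < a ⟨k - 1, by omega⟩)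
    (R : ℝ) (hRk : Real.log k < R) (hRd : R < Real.log d) :
    ∃ s : ℝ, 0 < s ∧
      shannonEntropy (escort a s) = R ∧
      (∀ b : Fin d → ℝ, (∀ i, 0 ≤ b i) → (∑ i, b i = 1) → shannonEntropy b = R →
        relativeEntropy (escort a s) a ≤ relativeEntropy b a) ∧
      IsLeast {x : ℝ | ∃ b : Fin d → ℝ, (∀ i, 0 ≤ b i) ∧ (∑ i, b i = 1) ∧
          shannonEntropy b = R ∧ x = relativeEntropy b a}
        (relativeEntropy (escort a s) a) := by
  have hd0 : 0 < d := by omega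
  have htend := entropy_escort_tendsto a ha_pos ha_anti k hk1 hkd hak hlt
  have hev : ∀ᶠ s in Filter.atTop, shannonEntropy (escort a s) < R :=
    htend.eventually_lt_const hRk
  obtain ⟨S, hSR, hS1⟩ := (hev.and (Filter.eventually_ge_atTop 1)).exists
  have hcont := entropy_escort_continuous hd0 a ha_pos
  have h0 : shannonEntropy (escort a 0) = Real.log d := entropy_escort_zero hd0 a ha_pos
  have hmem : R ∈ Set.Icc (shannonEntropy (escort a S)) (shannonEntropy (escort a 0)) :=
    ⟨hSR.le, by rw [h0]; exact hRd.le⟩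
  obtain ⟨s, hs_mem, hs_eq⟩ :=
    intermediate_value_Icc' (by linarith : (0:ℝ) ≤ S) hcont.continuousOn hmem
  have hs_eq : shannonEntropy (escort a s) = R := hs_eq
  have hs_pos : 0 < s := by
    rcases lt_or_eq_of_le hs_mem.1 with h | h
    · exact h
    · exfalso; rw [← h] at hs_eq; rw [h0] at hs_eq; linarith
  have hp_pos : ∀ i, 0 < escort a s i := escort_pos hd0 a ha_pos s
  have hp_sum : ∑ i, escort a s i = 1 := escort_sum hd0 a ha_pos s
  have hlogsum : ∀ c : Fin d → ℝ, ∑ i, c i = 1 →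
      ∑ i, c i * Real.log (escort a s i)
        = s * (∑ i, c i * Real.log (a i)) - Real.log (∑ j, a j ^ s) := by
    intro c hc
    calc ∑ i, c i * Real.log (escort a s i)
        = ∑ i, (s * (c i * Real.log (a i)) - c i * Real.log (∑ j, a j ^ s)) := by
          refine Finset.sum_congr rfl fun i _ => ?_
          rw [log_escort hd0 a ha_pos s i]; ring
      _ = s * (∑ i, c i * Real.log (a i)) - (∑ i, c i) * Real.log (∑ j, a j ^ s) := by
          rw [Finset.sum_sub_distrib, Finset.mul_sum, Finset.sum_mul]
      _ = _ := by rw [hc]; ring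
  have hHp : ∑ i, escort a s i * Real.log (escort a s i) = -R := by
    have := hs_eq; rw [shannonEntropy] at this; linarith
  have key : ∀ b : Fin d → ℝ, (∀ i, 0 ≤ b i) → (∑ i, b i = 1) → shannonEntropy b = R →
      relativeEntropy (escort a s) a ≤ relativeEntropy b a := by
    intro b hb0 hb1 hbR
    have hg := gibbs b (escort a s) hb0 hp_pos hb1 hp_sum
    have hgb := hlogsum b hb1
    have hgp := hlogsum (escort a s) hp_sum
    have hHb : ∑ i, b i * Real.log (b i) = -R := by
      have := hbR; rw [shannonEntropy] at this; linarith
    have h1 : s * (∑ i, b i * Real.log (a i)) ≤ s * (∑ i, escort a s i * Real.log (a i)) := by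
      linarith
    have h2 : ∑ i, b i * Real.log (a i) ≤ ∑ i, escort a s i * Real.log (a i) :=
      le_of_mul_le_mul_left h1 hs_pos
    rw [relEnt_eq, relEnt_eq, hbR, hs_eq]
    linarith
  exact ⟨s, hs_pos, hs_eq, key,
    ⟨⟨escort a s, fun i => (hp_pos i).le, hp_sum, hs_eq, rfl⟩,
      by rintro x ⟨b, hb0, hb1, hbR, rfl⟩; exact key b hb0 hb1 hbR⟩⟩
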